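/- If a topological space X can be written as a union of fewer than 𝔡 many Hurewicz subspaces, then X has property E*_ω: for every sequence of countable open covers (U_n) there exist finite V_n ⊆ U_n such that {⋃V_n : n ∈ ω} covers X. -/
import Mathlib


open Set Filter Topology

/-- `𝒰` is an open cover of the space `X`. -/
def IsOpenCover {X : Type} [TopologicalSpace X] (𝒰 : Set (Set X)) : Prop :=
  (∀ u ∈ 𝒰, IsOpen u) ∧ ⋃₀ 𝒰 = Set.univ

/-- The star of a set `A` with respect to a collection `𝒰`. -/
def st {X : Type} (A : Set X) (𝒰 : Set (Set X)) : Set X :=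
  ⋃₀ {u ∈ 𝒰 | (u ∩ A).Nonempty}
/-- Eventual domination `f ≤* g`. -/
def EvLE (f g : ℕ → ℕ) : Prop := ∀ᶠ n in Filter.atTop, f n ≤ g n

/-- The dominating number `𝔡`. -/
noncomputable def dominatingNumber : Cardinal :=
  sInf {c | ∃ D : Set (ℕ → ℕ),
    (∀ g : ℕ → ℕ, ∃ f ∈ D, EvLE g f) ∧ Cardinal.mk D = c}

/-- The bounding number `𝔟`. -/
noncomputable def boundingNumber : Cardinal :=
  sInf {c | ∃ B : Set (ℕ → ℕ),
    (¬ ∃ g : ℕ → ℕ, ∀ f ∈ B, EvLE f g) ∧ Cardinal.mk B = c}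
/-- The Menger property `S_fin(𝒪,𝒪)`. -/
def MengerSpace (X : Type) [TopologicalSpace X] : Prop :=
  ∀ 𝒰 : ℕ → Set (Set X), (∀ n, IsOpenCover (𝒰 n)) →
    ∃ 𝒱 : ℕ → Set (Set X), (∀ n, (𝒱 n).Finite ∧ 𝒱 n ⊆ 𝒰 n) ∧
      ∀ x : X, ∃ n, x ∈ ⋃₀ 𝒱 n

/-- The Hurewicz property. -/
def HurewiczSpace (X : Type) [TopologicalSpace X] : Prop :=
  ∀ 𝒰 : ℕ → Set (Set X), (∀ n, IsOpenCover (𝒰 n)) →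
    ∃ 𝒱 : ℕ → Set (Set X), (∀ n, (𝒱 n).Finite ∧ 𝒱 n ⊆ 𝒰 n) ∧
      ∀ x : X, ∀ᶠ n in Filter.atTop, x ∈ ⋃₀ 𝒱 n

/-- The star-Menger property. -/
def StarMengerSpace (X : Type) [TopologicalSpace X] : Prop :=
  ∀ 𝒰 : ℕ → Set (Set X), (∀ n, IsOpenCover (𝒰 n)) →
    ∃ 𝒱 : ℕ → Set (Set X), (∀ n, (𝒱 n).Finite ∧ 𝒱 n ⊆ 𝒰 n) ∧
      ∀ x : X, ∃ n, x ∈ st (⋃₀ 𝒱 n) (𝒰 n)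

/-- The star-Hurewicz property. -/
def StarHurewiczSpace (X : Type) [TopologicalSpace X] : Prop :=
  ∀ 𝒰 : ℕ → Set (Set X), (∀ n, IsOpenCover (𝒰 n)) →
    ∃ 𝒱 : ℕ → Set (Set X), (∀ n, (𝒱 n).Finite ∧ 𝒱 n ⊆ 𝒰 n) ∧
      ∀ x : X, ∀ᶠ n in Filter.atTop, x ∈ st (⋃₀ 𝒱 n) (𝒰 n)

/-- The strongly star-Menger property. -/
def StronglyStarMengerSpace (X : Type) [TopologicalSpace X] : Prop :=
  ∀ 𝒰 : ℕ → Set (Set X), (∀ n, IsOpenCover (𝒰 n)) →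
    ∃ F : ℕ → Set X, (∀ n, (F n).Finite) ∧
      ∀ x : X, ∃ n, x ∈ st (F n) (𝒰 n)

/-- The strongly star-Hurewicz property. -/
def StronglyStarHurewiczSpace (X : Type) [TopologicalSpace X] : Prop :=
  ∀ 𝒰 : ℕ → Set (Set X), (∀ n, IsOpenCover (𝒰 n)) →
    ∃ F : ℕ → Set X, (∀ n, (F n).Finite) ∧
      ∀ x : X, ∀ᶠ n in Filter.atTop, x ∈ st (F n) (𝒰 n)

/-- The star-Lindelöf property. -/
def StarLindelofSpace (X : Type) [TopologicalSpace X] : Prop :=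
  ∀ 𝒰 : Set (Set X), IsOpenCover 𝒰 →
    ∃ 𝒱 ⊆ 𝒰, 𝒱.Countable ∧ st (⋃₀ 𝒱) 𝒰 = Set.univ

/-- The strongly star-Lindelöf property. -/
def StronglyStarLindelofSpace (X : Type) [TopologicalSpace X] : Prop :=
  ∀ 𝒰 : Set (Set X), IsOpenCover 𝒰 →
    ∃ C : Set X, C.Countable ∧ st C 𝒰 = Set.univ

/-- Property `E*_ω` (countably Menger). -/
def EStarOmega (X : Type) [TopologicalSpace X] : Prop :=
  ∀ 𝒰 : ℕ → Set (Set X), (∀ n, IsOpenCover (𝒰 n) ∧ (𝒰 n).Countable) →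
    ∃ 𝒱 : ℕ → Set (Set X), (∀ n, (𝒱 n).Finite ∧ 𝒱 n ⊆ 𝒰 n) ∧
      ∀ x : X, ∃ n, x ∈ ⋃₀ 𝒱 n

/-- Property `E**_ω` (countably Hurewicz). -/
def EStarStarOmega (X : Type) [TopologicalSpace X] : Prop :=
  ∀ 𝒰 : ℕ → Set (Set X), (∀ n, IsOpenCover (𝒰 n) ∧ (𝒰 n).Countable) →
    ∃ 𝒱 : ℕ → Set (Set X), (∀ n, (𝒱 n).Finite ∧ 𝒱 n ⊆ 𝒰 n) ∧
      ∀ x : X, ∀ᶠ n in Filter.atTop, x ∈ ⋃₀ 𝒱 n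

theorem stmt (X : Type) [TopologicalSpace X] 
    (ι : Type) (Y : ι → Set X)
    (hcard : Cardinal.mk ι < dominatingNumber)
    (hY : ∀ i, HurewiczSpace (Y i))
    (hcover : ⋃ i, Y i = Set.univ) :
    EStarOmega X := by
  classical
  intro 𝒰 h𝒰
  by_cases hX : Nonempty X
  case neg =>
    exact ⟨fun _ => ∅, fun n => ⟨finite_empty, empty_subset _⟩,
      fun x => absurd ⟨x⟩ hX⟩
  obtain ⟨x0⟩ := hX
  -- enumerate each countable cover
  have hne : ∀ n, (𝒰 n).Nonempty := by
    intro n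
    rcases eq_empty_or_nonempty (𝒰 n) with h | h
    · exfalso
      have h2 := (h𝒰 n).1.2
      rw [h, sUnion_empty] at h2
      exact absurd (h2 ▸ mem_univ x0) (notMem_empty x0)
    · exact h
  choose e he using fun n => ((h𝒰 n).2).exists_eq_range (hne n)
  -- restricted covers on each Y i
  set 𝒲 : (i : ι) → ℕ → Set (Set (Y i)) :=
    fun i n => (fun u => ((Subtype.val ⁻¹' u) : Set (Y i))) '' (𝒰 n) with h𝒲
  have h𝒲cov : ∀ i n, IsOpenCover (𝒲 i n) := by
    intro i n
    constructor
    · rintro _ ⟨u, hu, rfl⟩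
      exact ((h𝒰 n).1.1 u hu).preimage continuous_subtype_val
    · ext y
      simp only [mem_univ, iff_true, mem_sUnion]
      have : (y : X) ∈ ⋃₀ 𝒰 n := by rw [(h𝒰 n).1.2]; exact mem_univ _
      obtain ⟨u, hu, hyu⟩ := this
      exact ⟨Subtype.val ⁻¹' u, ⟨u, hu, rfl⟩, hyu⟩
  choose 𝒱' h𝒱'fin h𝒱'cov using fun i => hY i (𝒲 i) (h𝒲cov i)
  -- pick indices for elements of the finite selections
  have hidx : ∀ (i : ι) (n : ℕ) (v : Set (Y i)),
      v ∈ 𝒱' i n → ∃ k, v = (Subtype.val ⁻¹' (e n k) : Set (Y i)) := by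
    intro i n v hv
    obtain ⟨u, hu, rfl⟩ := (h𝒱'fin i n).2 hv
    rw [he n] at hu
    obtain ⟨k, rfl⟩ := hu
    exact ⟨k, rfl⟩
  let idx : ∀ (i : ι) (n : ℕ), Set (Y i) → ℕ := fun i n v =>
    if h : ∃ k, v = (Subtype.val ⁻¹' (e n k) : Set (Y i)) then h.choose else 0
  have hidxspec : ∀ (i : ι) (n : ℕ) (v : Set (Y i)), v ∈ 𝒱' i n →
      v = (Subtype.val ⁻¹' (e n (idx i n v)) : Set (Y i)) := by
    intro i n v hv
    have h := hidx i n v hv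
    simp only [idx, dif_pos h]
    exact h.choose_spec
  let f : ι → ℕ → ℕ := fun i n => sSup (idx i n '' 𝒱' i n)
  have hf : ∀ (i : ι) (n : ℕ) (v : Set (Y i)), v ∈ 𝒱' i n → idx i n v ≤ f i n := by
    intro i n v hv
    exact le_csSup ((h𝒱'fin i n).1.image _).bddAbove (mem_image_of_mem _ hv)
  -- the family f is not dominating
  have hndom : ¬ ∀ g : ℕ → ℕ, ∃ f' ∈ Set.range f, EvLE g f' := by
    intro h
    have h1 : dominatingNumber ≤ Cardinal.mk (Set.range f) :=
      csInf_le (OrderBot.bddBelow _) ⟨Set.range f, h, rfl⟩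
    exact absurd (h1.trans Cardinal.mk_range_le) (not_le.mpr hcard)
  push_neg at hndom
  obtain ⟨g, hg⟩ := hndom
  refine ⟨fun n => e n '' {k | k ≤ g n}, fun n => ⟨?_, ?_⟩, ?_⟩
  · exact (Set.finite_Iic (g n)).image _
  · rintro _ ⟨k, _, rfl⟩
    rw [he n]
    exact mem_range_self k
  · intro x
    have hx : x ∈ ⋃ i, Y i := hcover ▸ mem_univ x
    obtain ⟨i, hi⟩ := mem_iUnion.mp hx
    have hev := h𝒱'cov i ⟨x, hi⟩
    have hfreq : ∃ᶠ n in Filter.atTop, f i n < g n := by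
      have := hg (f i) ⟨i, rfl⟩
      rw [EvLE, Filter.not_eventually] at this
      exact this.mono fun n hn => not_le.mp hn
    obtain ⟨n, hlt, hmem⟩ := (hfreq.and_eventually hev).exists
    obtain ⟨v, hv, hxv⟩ := hmem
    refine ⟨n, e n (idx i n v), ⟨idx i n v, le_of_lt (lt_of_le_of_lt (hf i n v hv) hlt), rfl⟩, ?_⟩
    have := hidxspec i n v hv
    rw [this] at hxv
    exact hxv
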